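/- Let Δ be a simplicial complex with associated simplicial binoid M_Δ = F(V)/I_Δ. Then the Hilbert-Kunz multiplicity of M_Δ exists and equals the number of facets of Δ of maximal dimension. -/

import Mathlib

/-!  Basic theory of (commutative) binoids: a commutative monoid together with
an absorbing element `infty`.  We use a bundled structure `BinoidOn X`. -/

structure BinoidOn (X : Type u) where
  add : X → X → X
  zero : X
  infty : X
  add_assoc : ∀ a b c : X, add (add a b) c = add a (add b c)
  add_comm : ∀ a b : X, add a b = add b a
  zero_add : ∀ a : X, add zero a = a
  infty_add : ∀ a : X, add infty a = infty

namespace BinoidOn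

variable {X : Type u} {Y : Type v} (B : BinoidOn X) (C : BinoidOn Y)

/-- `n`-fold multiple `n • a`. -/
def smul (B : BinoidOn X) : ℕ → X → X
  | 0, _ => B.zero
  | n + 1, a => B.add a (smul B n a)

/-- Sum of a list of elements. -/
def listSum (l : List X) : X := l.foldr B.add B.zero

/-- An ideal of a binoid: a nonempty subset `I` with `I + N ⊆ I`. -/
def IsIdeal (I : Set X) : Prop := I.Nonempty ∧ ∀ a ∈ I, ∀ x : X, B.add a x ∈ I

/-- A subbinoid: a submonoid containing `infty`. -/
def IsSubbinoid (M : Set X) : Prop :=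
  B.zero ∈ M ∧ B.infty ∈ M ∧ ∀ a ∈ M, ∀ b ∈ M, B.add a b ∈ M

/-- The set of units. -/
def unitsSet : Set X := {u | ∃ a, B.add u a = B.zero}

/-- `N₊`, the ideal of non-units. -/
def nplus : Set X := (B.unitsSet)ᶜ

/-- The ideal generated by a set. -/
def genIdeal (S : Set X) : Set X := {x | ∃ a ∈ S, ∃ n, x = B.add a n}

/-- The `n`-fold sum `nI = {a₁ + ⋯ + aₙ | aᵢ ∈ I}`. -/
def nSum (n : ℕ) (I : Set X) : Set X :=
  {x | ∃ l : List X, l.length = n ∧ (∀ a ∈ l, a ∈ I) ∧ x = B.listSum l}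

/-- The Frobenius power `[q]I`: the ideal generated by `{q • a | a ∈ I}`. -/
def frob (q : ℕ) (I : Set X) : Set X := B.genIdeal {x | ∃ a ∈ I, x = B.smul q a}

/-- The radical of an ideal. -/
def radical (I : Set X) : Set X := {a | ∃ n : ℕ, 0 < n ∧ B.smul n a ∈ I}

/-- `N₊`-primary ideal. -/
def IsPrimary (I : Set X) : Prop := B.radical I = B.nplus

/-- Finitely generated binoid. -/
def FG : Prop :=
  ∃ G : Finset X, ∀ x : X, x = B.infty ∨ ∃ l : List X, (∀ a ∈ l, a ∈ G) ∧ x = B.listSum l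

/-- Semipositive: a nonzero binoid with finitely many units. -/
def Semipositive : Prop := B.zero ≠ B.infty ∧ B.unitsSet.Finite

/-- Prime ideal. -/
def IsPrime (P : Set X) : Prop :=
  B.IsIdeal P ∧ P ≠ Set.univ ∧ ∀ a b : X, B.add a b ∈ P → a ∈ P ∨ b ∈ P

/-- The (combinatorial) dimension of the binoid is `d`: there is a strictly
increasing chain of prime ideals of length `d`, and no longer one. -/
def HasDim (d : ℕ) : Prop :=
  (∃ c : Fin (d + 1) → Set X, StrictMono c ∧ ∀ i, B.IsPrime (c i)) ∧
    ∀ (k : ℕ) (c : Fin (k + 1) → Set X), StrictMono c → (∀ i, B.IsPrime (c i)) → k ≤ d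

end BinoidOn

/-- The setoid collapsing a subset `A` to a single point (Rees congruence). -/
def collapseSetoid {X : Type u} (A : Set X) : Setoid X where
  r x y := x = y ∨ (x ∈ A ∧ y ∈ A)
  iseqv := ⟨fun _ => Or.inl rfl,
    fun h => h.elim (fun e => Or.inl e.symm) (fun h => Or.inr ⟨h.2, h.1⟩),
    fun h1 h2 => by
      rcases h1 with rfl | h1
      · exact h2
      · rcases h2 with rfl | h2
        · exact Or.inr h1
        · exact Or.inr ⟨h1.1, h2.2⟩⟩

namespace BinoidOn

variable {X : Type u} {Y : Type v} (B : BinoidOn X) (C : BinoidOn Y)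

/-- The underlying set of the Rees quotient `N/I` (we collapse the ideal
generated by `I`; for an ideal `I` this is `I` itself). -/
abbrev ReesQuot (I : Set X) : Type u := Quotient (collapseSetoid (B.genIdeal I))

lemma genIdeal_closed {I : Set X} {a : X} (ha : a ∈ B.genIdeal I) (x : X) :
    B.add a x ∈ B.genIdeal I := by
  obtain ⟨b, hb, n, rfl⟩ := ha
  exact ⟨b, hb, B.add n x, (B.add_assoc b n x)⟩

/-- The Rees quotient binoid `N/I`. -/
def quotB (I : Set X) : BinoidOn (B.ReesQuot I) where
  add := Quotient.map₂ B.add (by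
    rintro a a' (rfl | ⟨ha, ha'⟩) b b' (rfl | ⟨hb, hb'⟩)
    · exact Or.inl rfl
    · exact Or.inr ⟨by rw [B.add_comm]; exact B.genIdeal_closed hb _,
        by rw [B.add_comm]; exact B.genIdeal_closed hb' _⟩
    · exact Or.inr ⟨B.genIdeal_closed ha _, B.genIdeal_closed ha' _⟩
    · exact Or.inr ⟨B.genIdeal_closed ha _, B.genIdeal_closed ha' _⟩)
  zero := Quotient.mk _ B.zero
  infty := Quotient.mk _ B.infty
  add_assoc := by
    rintro ⟨a⟩ ⟨b⟩ ⟨c⟩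
    exact congrArg (Quotient.mk _) (B.add_assoc a b c)
  add_comm := by
    rintro ⟨a⟩ ⟨b⟩
    exact congrArg (Quotient.mk _) (B.add_comm a b)
  zero_add := by
    rintro ⟨a⟩
    exact congrArg (Quotient.mk _) (B.zero_add a)
  infty_add := by
    rintro ⟨a⟩
    exact congrArg (Quotient.mk _) (B.infty_add a)

/-- The underlying set of `N/[q]N₊`. -/
abbrev hkQuot (q : ℕ) : Type u := Quotient (collapseSetoid (B.frob q B.nplus))

/-- The Hilbert–Kunz function `HKF(N,q) = #(N/[q]N₊)`, where `#S = |S| - 1`. -/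
noncomputable def hkf (q : ℕ) : ℕ := Nat.card (B.hkQuot q) - 1

/-- Pairs with an `infty` coordinate. -/
def inftyPairs : Set (X × Y) := {p | p.1 = B.infty ∨ p.2 = C.infty}

/-- Carrier of the smash product `M ∧ N`. -/
abbrev SmashCarrier : Type _ := Quotient (collapseSetoid (B.inftyPairs C))

lemma inftyPairs_add_left {p q : X × Y} (hp : p ∈ B.inftyPairs C) :
    (B.add p.1 q.1, C.add p.2 q.2) ∈ B.inftyPairs C := by
  rcases hp with h | h
  · exact Or.inl (by rw [h, B.infty_add])
  · exact Or.inr (by rw [h, C.infty_add])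

lemma inftyPairs_add_right {p q : X × Y} (hq : q ∈ B.inftyPairs C) :
    (B.add p.1 q.1, C.add p.2 q.2) ∈ B.inftyPairs C := by
  rcases hq with h | h
  · exact Or.inl (by rw [h, B.add_comm, B.infty_add])
  · exact Or.inr (by rw [h, C.add_comm, C.infty_add])

/-- The smash product binoid `M ∧ N`. -/
def smash : BinoidOn (B.SmashCarrier C) where
  add := Quotient.map₂ (fun p q => (B.add p.1 q.1, C.add p.2 q.2)) (by
    rintro p p' (rfl | ⟨hp, hp'⟩) q q' (rfl | ⟨hq, hq'⟩)
    · exact Or.inl rfl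
    · exact Or.inr ⟨B.inftyPairs_add_right C hq, B.inftyPairs_add_right C hq'⟩
    · exact Or.inr ⟨B.inftyPairs_add_left C hp, B.inftyPairs_add_left C hp'⟩
    · exact Or.inr ⟨B.inftyPairs_add_left C hp, B.inftyPairs_add_left C hp'⟩)
  zero := Quotient.mk _ (B.zero, C.zero)
  infty := Quotient.mk _ (B.infty, C.infty)
  add_assoc := by
    rintro ⟨a⟩ ⟨b⟩ ⟨c⟩
    exact congrArg (Quotient.mk _)
      (Prod.ext (B.add_assoc _ _ _) (C.add_assoc _ _ _))
  add_comm := by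
    rintro ⟨a⟩ ⟨b⟩
    exact congrArg (Quotient.mk _)
      (Prod.ext (B.add_comm _ _) (C.add_comm _ _))
  zero_add := by
    rintro ⟨a⟩
    exact congrArg (Quotient.mk _)
      (Prod.ext (B.zero_add _) (C.zero_add _))
  infty_add := by
    rintro ⟨a⟩
    exact congrArg (Quotient.mk _)
      (Prod.ext (B.infty_add _) (C.infty_add _))

end BinoidOn

/-- An `N`-set: a pointed set with an operation of the binoid. -/
structure NSetOn {X : Type u} (B : BinoidOn X) (S : Type w) where
  pt : S
  act : X → S → S
  act_zero : ∀ s, act B.zero s = s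
  act_infty : ∀ s, act B.infty s = pt
  act_pt : ∀ n, act n pt = pt
  act_add : ∀ n m s, act (B.add n m) s = act n (act m s)

section NSet

variable {X : Type u} {S : Type w} {B : BinoidOn X}

/-- One step of the connectedness relation on `S ∖ {p}`. -/
def NStep (σ : NSetOn B S) (s t : S) : Prop :=
  s ≠ σ.pt ∧ t ≠ σ.pt ∧ ∃ n, n ≠ B.infty ∧ (σ.act n s = t ∨ σ.act n t = s)

/-- The connectedness (equivalence) relation `∼_N` on `S ∖ {p}`. -/
def NConn (σ : NSetOn B S) : S → S → Prop := Relation.ReflTransGen (NStep σ)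

/-- `N`-subsets of an `N`-set. -/
def IsNSubset (σ : NSetOn B S) (T : Set S) : Prop :=
  σ.pt ∈ T ∧ ∀ n : X, ∀ s ∈ T, σ.act n s ∈ T

/-- `T` is a pointed union of two nontrivial `N`-subsets. -/
def IsReducibleSet (σ : NSetOn B S) (T : Set S) : Prop :=
  ∃ A A' : Set S, IsNSubset σ A ∧ IsNSubset σ A' ∧
    A ≠ {σ.pt} ∧ A' ≠ {σ.pt} ∧ A ∪ A' = T ∧ A ∩ A' = {σ.pt}

/-- An irreducible `N`-subset. -/
def IsIrreducibleSet (σ : NSetOn B S) (T : Set S) : Prop :=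
  IsNSubset σ T ∧ T ≠ {σ.pt} ∧ ¬ IsReducibleSet σ T

end NSet

/-- The trivial binoid `{0, ∞}`, realized on `Bool` (`false = 0`, `true = ∞`). -/
def trivB : BinoidOn Bool where
  add := or
  zero := false
  infty := true
  add_assoc := by decide
  add_comm := by decide
  zero_add := by decide
  infty_add := by decide

/-- The binoid `M^∞` obtained from a commutative monoid by adjoining `∞ = ⊤`. -/
def withTopBinoid (M : Type u) [AddCommMonoid M] : BinoidOn (WithTop M) where
  add := (· + ·)
  zero := 0
  infty := ⊤
  add_assoc := add_assoc
  add_comm := add_comm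
  zero_add := zero_add
  infty_add := fun a => WithTop.top_add a

/-!
The primes of the free binoid `(ℕ^V)^∞` are the `𝔭_F = ⟨V ∖ F⟩`, and those containing `I_Δ` are
exactly the ones with `F ∈ Δ`. Since `𝔭_F ⊆ 𝔭_G ↔ G ⊆ F`, a longest chain of primes of `M_Δ` is a
full flag in a largest face, so `dim M_Δ = max |F|`. Modulo `[q]M₊` the classes that survive are the
monomials `f` with `supp f ∈ Δ` and all exponents `< q`; sorting them by support gives
`HKF(M_Δ, q) = ∑_{F ∈ Δ} (q - 1)^|F|`, and after dividing by `q^dim` only the faces of maximal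
cardinality contribute to the limit, each with `1`.
-/

open Filter Topology Finset

section Collapse

variable {X : Type*} {A : Set X}

theorem collapseSetoid_mk_eq_iff {x y : X} :
    (Quotient.mk (collapseSetoid A) x = Quotient.mk _ y) ↔ x = y ∨ (x ∈ A ∧ y ∈ A) :=
  Quotient.eq

theorem Nat.card_quotient_collapseSetoid_sub_one (hA : A.Nonempty) :
    Nat.card (Quotient (collapseSetoid A)) - 1 = Aᶜ.ncard := by
  obtain ⟨a, ha⟩ := hA
  let φ : Option ↥Aᶜ → Quotient (collapseSetoid A) :=
    fun o => o.elim (Quotient.mk _ a) fun y => Quotient.mk _ y.1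
  have hφ : Function.Bijective φ := by
    refine ⟨?_, Quotient.ind fun x => ?_⟩
    · rintro (_ | ⟨y, hy⟩) (_ | ⟨z, hz⟩) h <;>
        simp only [φ, Option.elim, collapseSetoid_mk_eq_iff] at h
      · rfl
      · rcases h with rfl | h
        exacts [(hz ha).elim, (hz h.2).elim]
      · rcases h with rfl | h
        exacts [(hy ha).elim, (hy h.1).elim]
      · rcases h with rfl | h
        exacts [rfl, (hy h.1).elim]
    · by_cases hx : x ∈ A
      · exact ⟨none, collapseSetoid_mk_eq_iff.mpr (Or.inr ⟨ha, hx⟩)⟩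
      · exact ⟨some ⟨x, hx⟩, rfl⟩
  rw [← Nat.card_congr (Equiv.ofBijective φ hφ), ← Nat.card_coe_set_eq]
  rcases finite_or_infinite ↥Aᶜ with h | h
  · rw [Finite.card_option, Nat.add_sub_cancel]
  · rw [Nat.card_eq_zero_of_infinite, Nat.card_eq_zero_of_infinite]

theorem ncard_compl_preimage_collapseSetoid_mk {S : Set (Quotient (collapseSetoid A))}
    (hS : ∀ a ∈ A, Quotient.mk _ a ∈ S) :
    (Quotient.mk (collapseSetoid A) ⁻¹' S)ᶜ.ncard = Sᶜ.ncard := by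
  rw [← Set.image_preimage_eq Sᶜ Quotient.mk_surjective, Set.preimage_compl]
  refine (Set.InjOn.ncard_image fun x hx y hy hxy => ?_).symm
  rcases collapseSetoid_mk_eq_iff.mp hxy with h | ⟨hxA, _⟩
  exacts [h, (hx (hS x hxA)).elim]

end Collapse

namespace BinoidOn

variable {X : Type*} (B : BinoidOn X)

theorem add_zero (a : X) : B.add a B.zero = a := by
  rw [B.add_comm, B.zero_add]

theorem add_infty (a : X) : B.add a B.infty = B.infty := by
  rw [B.add_comm, B.infty_add]

theorem subset_genIdeal (I : Set X) : I ⊆ B.genIdeal I :=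
  fun a ha => ⟨a, ha, B.zero, (B.add_zero a).symm⟩

theorem genIdeal_eq_self {I : Set X} (hI : ∀ a ∈ I, ∀ x, B.add a x ∈ I) : B.genIdeal I = I :=
  (Set.Subset.antisymm (fun _ ⟨a, ha, x, hx⟩ => hx ▸ hI a ha x) (B.subset_genIdeal I))

theorem infty_mem_frob {S : Set X} (hS : S.Nonempty) (q : ℕ) : B.infty ∈ B.frob q S := by
  obtain ⟨a, ha⟩ := hS
  exact ⟨B.smul q a, ⟨a, ha, rfl⟩, B.infty, (B.add_infty _).symm⟩

section Prime

variable {B} {P : Set X}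

theorem IsPrime.add_mem_iff (hP : B.IsPrime P) {a b : X} :
    B.add a b ∈ P ↔ a ∈ P ∨ b ∈ P :=
  ⟨hP.2.2 a b, fun h => h.elim (fun ha => hP.1.2 a ha b)
    fun hb => B.add_comm b a ▸ hP.1.2 b hb a⟩

theorem IsPrime.zero_notMem (hP : B.IsPrime P) : B.zero ∉ P := fun h0 =>
  hP.2.1 (Set.eq_univ_of_forall fun x => B.zero_add x ▸ hP.1.2 _ h0 x)

end Prime

section Rees

variable (I : Set X)

abbrev reesMk (x : X) : B.ReesQuot I := Quotient.mk _ x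

variable {B I}

theorem reesMk_surjective : Function.Surjective (B.reesMk I) := Quotient.mk_surjective

theorem reesMk_eq_reesMk_iff {x y : X} :
    B.reesMk I x = B.reesMk I y ↔ x = y ∨ (x ∈ B.genIdeal I ∧ y ∈ B.genIdeal I) :=
  collapseSetoid_mk_eq_iff

theorem quotB_add_reesMk (x y : X) :
    (B.quotB I).add (B.reesMk I x) (B.reesMk I y) = B.reesMk I (B.add x y) := rfl

theorem quotB_smul_reesMk (n : ℕ) (x : X) :
    (B.quotB I).smul n (B.reesMk I x) = B.reesMk I (B.smul n x) := by
  induction n with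
  | zero => rfl
  | succ n ih => exact congrArg ((B.quotB I).add (B.reesMk I x)) ih

theorem reesMk_mem_unitsSet_iff (h0 : B.zero ∉ B.genIdeal I) {x : X} :
    B.reesMk I x ∈ (B.quotB I).unitsSet ↔ x ∈ B.unitsSet := by
  refine ⟨fun ⟨c, hc⟩ => ?_, fun ⟨y, hy⟩ => ⟨B.reesMk I y, congrArg (B.reesMk I) hy⟩⟩
  obtain ⟨y, rfl⟩ := reesMk_surjective c
  rcases reesMk_eq_reesMk_iff.mp hc with h | ⟨_, h⟩
  exacts [⟨y, h⟩, (h0 h).elim]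

theorem reesMk_mem_nplus_iff (h0 : B.zero ∉ B.genIdeal I) {x : X} :
    B.reesMk I x ∈ (B.quotB I).nplus ↔ x ∈ B.nplus :=
  (reesMk_mem_unitsSet_iff h0).not

theorem reesMk_mem_frob_nplus_iff (hI : I.Nonempty) (h0 : B.zero ∉ B.genIdeal I) {q : ℕ}
    {x : X} : B.reesMk I x ∈ (B.quotB I).frob q (B.quotB I).nplus ↔
      x ∈ B.genIdeal I ∨ x ∈ B.frob q B.nplus := by
  have hinfty : B.infty ∈ B.genIdeal I := by
    obtain ⟨a, ha⟩ := hI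
    exact ⟨a, ha, B.infty, (B.add_infty a).symm⟩
  have hnplus : B.infty ∈ B.nplus := fun ⟨a, ha⟩ => h0 (by rwa [← ha, B.infty_add])
  constructor
  · rintro ⟨-, ⟨c, hc, rfl⟩, n, hx⟩
    obtain ⟨z, rfl⟩ := reesMk_surjective c
    obtain ⟨m, rfl⟩ := reesMk_surjective n
    rw [quotB_smul_reesMk, quotB_add_reesMk, reesMk_eq_reesMk_iff] at hx
    rcases hx with rfl | ⟨hx, -⟩
    exacts [Or.inr ⟨_, ⟨z, (reesMk_mem_nplus_iff h0).mp hc, rfl⟩, m, rfl⟩, Or.inl hx]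
  · rintro (hx | ⟨-, ⟨z, hz, rfl⟩, m, rfl⟩)
    · have : B.reesMk I x = B.reesMk I B.infty := reesMk_eq_reesMk_iff.mpr (Or.inr ⟨hx, hinfty⟩)
      rw [this]
      exact (B.quotB I).infty_mem_frob ⟨_, (reesMk_mem_nplus_iff h0).mpr hnplus⟩ q
    · exact ⟨_, ⟨B.reesMk I z, (reesMk_mem_nplus_iff h0).mpr hz, rfl⟩, B.reesMk I m,
        by rw [quotB_smul_reesMk, quotB_add_reesMk]⟩

theorem IsPrime.preimage_reesMk {P : Set (B.ReesQuot I)} (hP : (B.quotB I).IsPrime P) :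
    B.IsPrime (B.reesMk I ⁻¹' P) := by
  obtain ⟨⟨⟨c, hc⟩, hideal⟩, hne, hprime⟩ := hP
  obtain ⟨x, rfl⟩ := reesMk_surjective c
  refine ⟨⟨⟨x, hc⟩, fun a ha y => hideal _ ha (B.reesMk I y)⟩, fun h => hne ?_,
    fun a b hab => hprime _ _ hab⟩
  rw [← Set.image_preimage_eq P reesMk_surjective, h, Set.image_univ,
    Set.range_eq_univ.mpr reesMk_surjective]

theorem IsPrime.genIdeal_subset_preimage_reesMk {P : Set (B.ReesQuot I)}
    (hP : (B.quotB I).IsPrime P) : B.genIdeal I ⊆ B.reesMk I ⁻¹' P := by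
  obtain ⟨⟨⟨c, hc⟩, hideal⟩, -⟩ := hP
  obtain ⟨y, rfl⟩ := reesMk_surjective c
  intro x hx
  have : B.reesMk I x = B.reesMk I (B.add y x) := reesMk_eq_reesMk_iff.mpr
    (Or.inr ⟨hx, by rw [B.add_comm]; exact B.genIdeal_closed hx y⟩)
  rw [Set.mem_preimage, this]
  exact hideal _ hc (B.reesMk I x)

theorem reesMk_mem_image_iff {Q : Set X} (hQ : B.genIdeal I ⊆ Q) {x : X} :
    B.reesMk I x ∈ B.reesMk I '' Q ↔ x ∈ Q := by
  refine ⟨fun ⟨y, hy, hyx⟩ => ?_, fun hx => ⟨x, hx, rfl⟩⟩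
  rcases reesMk_eq_reesMk_iff.mp hyx with rfl | ⟨-, hx⟩
  exacts [hy, hQ hx]

theorem image_reesMk_subset_image_reesMk_iff {Q Q' : Set X} (hQ' : B.genIdeal I ⊆ Q') :
    B.reesMk I '' Q ⊆ B.reesMk I '' Q' ↔ Q ⊆ Q' :=
  ⟨fun h x hx => (reesMk_mem_image_iff hQ').mp (h ⟨x, hx, rfl⟩), Set.image_mono⟩

theorem IsPrime.image_reesMk {Q : Set X} (hQ : B.IsPrime Q) (hIQ : B.genIdeal I ⊆ Q) :
    (B.quotB I).IsPrime (B.reesMk I '' Q) := by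
  obtain ⟨⟨hne, hideal⟩, huniv, hprime⟩ := hQ
  have hmem : ∀ x, B.reesMk I x ∈ B.reesMk I '' Q ↔ x ∈ Q := fun x => reesMk_mem_image_iff hIQ
  refine ⟨⟨hne.image _, ?_⟩, fun h => huniv ?_, ?_⟩
  · rintro _ ⟨x, hx, rfl⟩ c
    obtain ⟨y, rfl⟩ := reesMk_surjective c
    exact (hmem _).mpr (hideal x hx y)
  · exact Set.eq_univ_of_forall fun x => (hmem x).mp (h ▸ Set.mem_univ _)
  · intro c d hcd
    obtain ⟨x, rfl⟩ := reesMk_surjective c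
    obtain ⟨y, rfl⟩ := reesMk_surjective d
    simpa only [hmem] using hprime x y ((hmem _).mp hcd)

end Rees

end BinoidOn

theorem Fin.val_add_le_of_strictAnti {k : ℕ} {f : Fin (k + 1) → ℕ} (hf : StrictAnti f)
    (i : Fin (k + 1)) : (i : ℕ) + f i ≤ f 0 := by
  induction i using Fin.induction with
  | zero => simp
  | succ i ih =>
    have := hf (Fin.castSucc_lt_succ (i := i))
    simp only [Fin.val_succ, Fin.val_castSucc] at ih ⊢
    omega

theorem Finset.exists_strictMono_subsets {α : Type*} (F : Finset α) :
    ∃ G : Fin (#F + 1) → Finset α, StrictMono G ∧ ∀ i, G i ⊆ F := by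
  classical
  set G : Fin (#F + 1) → Finset α := fun i => (F.toList.take i).toFinset
  have hcard (i : Fin (#F + 1)) : #(G i) = i := by
    rw [List.toFinset_card_of_nodup (F.nodup_toList.sublist (List.take_sublist _ _)),
      List.length_take, Finset.length_toList]
    omega
  refine ⟨G, Monotone.strictMono_of_injective (fun i j hij v hv => ?_)
    (fun i j h => Fin.ext (by rw [← hcard i, ← hcard j, h])), fun i v hv => ?_⟩
  · simp only [G, List.mem_toFinset] at hv ⊢
    exact (List.take_prefix_take_left hij).subset hv
  · simpa [G] using List.mem_of_mem_take (List.mem_toFinset.mp hv)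

section Faces

variable {V : Type*} {Δ : Finset (Finset V)}

theorem exists_strictMono_faces (hΔ : Δ.Nonempty) (hdown : ∀ F ∈ Δ, ∀ G, G ⊆ F → G ∈ Δ) :
    ∃ G : Fin (Δ.sup Finset.card + 1) → Finset V, StrictMono G ∧ ∀ i, G i ∈ Δ := by
  obtain ⟨F, hF, hsup⟩ := Δ.exists_mem_eq_sup hΔ Finset.card
  obtain ⟨G, hG, hGF⟩ := F.exists_strictMono_subsets
  exact hsup ▸ ⟨G, hG, fun i => hdown F hF _ (hGF i)⟩

theorem le_sup_card_of_strictAnti {k : ℕ} {G : Fin (k + 1) → Finset V} (hG : StrictAnti G)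
    (hGΔ : ∀ i, G i ∈ Δ) : k ≤ Δ.sup Finset.card :=
  calc k ≤ k + #(G (Fin.last k)) := Nat.le_add_right _ _
    _ ≤ #(G 0) := by
      simpa using Fin.val_add_le_of_strictAnti (Finset.card_strictMono.comp_strictAnti hG) (.last k)
    _ ≤ Δ.sup Finset.card := Finset.le_sup (hGΔ 0)

end Faces

theorem BinoidOn.hasDim_of_primes_eq_faces {X V : Type*} {B : BinoidOn X}
    {Δ : Finset (Finset V)} (hΔ : Δ.Nonempty) (hdown : ∀ F ∈ Δ, ∀ G, G ⊆ F → G ∈ Δ)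
    (P : Finset V → Set X) (hP : ∀ F ∈ Δ, B.IsPrime (P F))
    (hprimes : ∀ Q, B.IsPrime Q → ∃ F ∈ Δ, Q = P F)
    (hsubset : ∀ F ∈ Δ, ∀ G ∈ Δ, P F ⊆ P G ↔ G ⊆ F) :
    B.HasDim (Δ.sup Finset.card) := by
  have hssubset {F G} (hF : F ∈ Δ) (hG : G ∈ Δ) : P F ⊂ P G ↔ G ⊂ F := by
    rw [ssubset_iff_subset_not_subset, ssubset_iff_subset_not_subset, hsubset F hF G hG,
      hsubset G hG F hF]
  refine ⟨?_, fun k c hc hcP => ?_⟩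
  · obtain ⟨G, hG, hGΔ⟩ := exists_strictMono_faces hΔ hdown
    exact ⟨fun i => P (G i.rev), fun i j hij => (hssubset (hGΔ _) (hGΔ _)).mpr
      (hG (Fin.rev_lt_rev.mpr hij)), fun i => hP _ (hGΔ _)⟩
  · choose F hFΔ hcF using fun i => hprimes (c i) (hcP i)
    refine le_sup_card_of_strictAnti (fun i j hij => ?_) hFΔ
    have := hc hij
    rwa [hcF, hcF, hssubset (hFΔ i) (hFΔ j)] at this

theorem Finset.sum_mem_iff_exists_mem {ι M : Type*} [AddCommMonoid M] {Q : Set M}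
    (hadd : ∀ a b, a + b ∈ Q ↔ a ∈ Q ∨ b ∈ Q) (h0 : (0 : M) ∉ Q) (s : Finset ι) (g : ι → M) :
    ∑ i ∈ s, g i ∈ Q ↔ ∃ i ∈ s, g i ∈ Q := by
  classical
  induction s using Finset.induction_on with
  | empty => simpa using h0
  | insert a s ha ih => rw [sum_insert ha, hadd, ih, exists_mem_insert]

theorem nsmul_mem_iff_of_add_mem_iff {M : Type*} [AddCommMonoid M] {Q : Set M}
    (hadd : ∀ a b, a + b ∈ Q ↔ a ∈ Q ∨ b ∈ Q) (h0 : (0 : M) ∉ Q) (n : ℕ) (a : M) :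
    n • a ∈ Q ↔ n ≠ 0 ∧ a ∈ Q := by
  have := Finset.sum_mem_iff_exists_mem hadd h0 (range n) fun _ => a
  simp only [sum_const, card_range, mem_range, exists_and_right] at this
  rw [this, ← Nat.pos_iff_ne_zero]
  exact and_congr_left' ⟨fun ⟨i, hi⟩ => by omega, fun hn => ⟨0, hn⟩⟩

section WithTopBinoid

variable {M : Type*} [AddCommMonoid M]

@[simp]
theorem withTopBinoid_add (x y : WithTop M) : (withTopBinoid M).add x y = x + y := rfl

theorem withTopBinoid_smul (n : ℕ) (x : WithTop M) : (withTopBinoid M).smul n x = n • x := by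
  induction n with
  | zero => exact (zero_nsmul x).symm
  | succ n ih => exact (congrArg (x + ·) ih).trans (succ_nsmul' x n).symm

theorem withTopBinoid_nplus [PartialOrder M] [CanonicallyOrderedAdd M] :
    (withTopBinoid M).nplus = {0}ᶜ := by
  ext x
  simp only [BinoidOn.nplus, BinoidOn.unitsSet, Set.mem_compl_iff, Set.mem_ofPred_eq,
    Set.mem_singleton_iff]
  exact not_congr
    ⟨fun ⟨a, ha⟩ => (add_eq_zero.mp ha).1, fun hx => ⟨0, show x + 0 = 0 by simp [hx]⟩⟩

end WithTopBinoid

theorem tendsto_sub_one_pow_div_pow {k d : ℕ} (hkd : k ≤ d) :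
    Tendsto (fun q : ℕ => ((q : ℝ) - 1) ^ k / (q : ℝ) ^ d) atTop
      (𝓝 (if k = d then 1 else 0)) := by
  obtain ⟨m, rfl⟩ := Nat.exists_eq_add_of_le hkd
  have hinv : Tendsto (fun q : ℕ => (q : ℝ)⁻¹) atTop (𝓝 0) :=
    tendsto_inv_atTop_zero.comp tendsto_natCast_atTop_atTop
  have := ((tendsto_const_nhds (x := (1 : ℝ))).sub hinv |>.pow k).mul (hinv.pow m)
  rw [sub_zero, one_pow, one_mul, zero_pow_eq] at this
  simp only [left_eq_add]
  refine this.congr' ((eventually_ne_atTop 0).mono fun q hq => ?_)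
  dsimp only
  have hq : (q : ℝ) ≠ 0 := Nat.cast_ne_zero.mpr hq
  have : 1 - (q : ℝ)⁻¹ = (q - 1) / q := by field_simp
  rw [this, div_pow, inv_pow, ← div_eq_mul_inv, div_div, ← pow_add]

theorem tendsto_sum_sub_one_pow_div_pow_sup {ι : Type*} (s : Finset ι) (k : ι → ℕ) :
    Tendsto (fun q : ℕ => (∑ i ∈ s, ((q : ℝ) - 1) ^ k i) / (q : ℝ) ^ s.sup k) atTop
      (𝓝 #{i ∈ s | k i = s.sup k}) := by
  simp_rw [sum_div, natCast_card_filter]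
  exact tendsto_finsetSum s fun i hi => tendsto_sub_one_pow_div_pow (le_sup hi)

namespace SimplicialBinoid

variable {V : Type*}

theorem mem_frob_nplus_iff {q : ℕ} (hq : q ≠ 0) {x : WithTop (V → ℕ)} :
    x ∈ (withTopBinoid (V → ℕ)).frob q (withTopBinoid (V → ℕ)).nplus ↔
      ∀ f : V → ℕ, x = ↑f → ∃ v, q ≤ f v := by
  classical
  rw [withTopBinoid_nplus]
  constructor
  · rintro ⟨-, ⟨z, hz, rfl⟩, m, rfl⟩ f hf
    induction z using WithTop.recTopCoe with
    | top =>
      obtain ⟨n, rfl⟩ := Nat.exists_eq_succ_of_ne_zero hq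
      simp [withTopBinoid_smul, succ_nsmul] at hf
    | coe g =>
      induction m using WithTop.recTopCoe with
      | top => simp at hf
      | coe h =>
        obtain ⟨v, hv⟩ := Function.ne_iff.mp (WithTop.coe_ne_zero.mp hz)
        rw [withTopBinoid_smul, withTopBinoid_add, ← WithTop.coe_nsmul, ← WithTop.coe_add,
          WithTop.coe_inj] at hf
        refine ⟨v, ?_⟩
        have : f v = q * g v + h v := by simp [← hf]
        have : 1 ≤ g v := Nat.one_le_iff_ne_zero.mpr hv
        nlinarith
  · intro h
    induction x using WithTop.recTopCoe with
    | top => exact BinoidOn.infty_mem_frob _ ⟨⊤, WithTop.top_ne_zero⟩ q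
    | coe f =>
      obtain ⟨v, hv⟩ := h f rfl
      set e : V → ℕ := Pi.single v 1
      have hle : q • e ≤ f := fun w => by
        by_cases hw : w = v
        · subst hw; simpa [e] using hv
        · simp [e, hw]
      refine ⟨_, ⟨↑e, by simp [e], rfl⟩, ↑(f - q • e), ?_⟩
      rw [withTopBinoid_smul, withTopBinoid_add, ← WithTop.coe_nsmul, ← WithTop.coe_add,
        add_tsub_cancel_of_le hle]

variable [Fintype V]

def supp (f : V → ℕ) : Finset V := univ.filter fun v => f v ≠ 0

@[simp]
theorem mem_supp {f : V → ℕ} {v : V} : v ∈ supp f ↔ f v ≠ 0 := by simp [supp]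

theorem supp_add [DecidableEq V] (f g : V → ℕ) : supp (f + g) = supp f ∪ supp g := by
  ext v
  simp only [mem_supp, Pi.add_apply, mem_union]
  omega

theorem supp_single [DecidableEq V] (v : V) {n : ℕ} (hn : n ≠ 0) :
    supp (Pi.single v n) = {v} := by
  ext w
  by_cases h : w = v <;> simp [h, hn]

theorem exists_supp_eq (F : Finset V) : ∃ f : V → ℕ, supp f = F := by
  classical
  exact ⟨fun v => if v ∈ F then 1 else 0, by ext v; by_cases hv : v ∈ F <;> simp [hv]⟩

/-- The prime ideal `𝔭_F = ⟨V ∖ F⟩` of the free binoid `(ℕ^V)^∞`. -/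
def facePrime (F : Finset V) : Set (WithTop (V → ℕ)) := {x | ∀ f : V → ℕ, x = ↑f → ¬supp f ⊆ F}

variable {F G : Finset V}

@[simp]
theorem top_mem_facePrime : (⊤ : WithTop (V → ℕ)) ∈ facePrime F :=
  fun _ h => (WithTop.top_ne_coe h).elim

@[simp]
theorem coe_mem_facePrime_iff {f : V → ℕ} : (f : WithTop (V → ℕ)) ∈ facePrime F ↔ ¬supp f ⊆ F :=
  ⟨fun h => h f rfl, fun h _ hf => WithTop.coe_injective hf ▸ h⟩

theorem add_mem_facePrime_iff {x y : WithTop (V → ℕ)} :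
    x + y ∈ facePrime F ↔ x ∈ facePrime F ∨ y ∈ facePrime F := by
  classical
  induction x using WithTop.recTopCoe <;> induction y using WithTop.recTopCoe <;>
    simp [← WithTop.coe_add, supp_add, union_subset_iff, imp_iff_not_or]

theorem isPrime_facePrime (F : Finset V) : (withTopBinoid (V → ℕ)).IsPrime (facePrime F) := by
  refine ⟨⟨⟨⊤, top_mem_facePrime⟩, fun x hx y => add_mem_facePrime_iff.mpr (Or.inl hx)⟩,
    fun h => ?_, fun x y => add_mem_facePrime_iff.mp⟩
  have h0 : ((0 : V → ℕ) : WithTop (V → ℕ)) ∈ facePrime F := h ▸ Set.mem_univ _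
  exact coe_mem_facePrime_iff.mp h0 fun v hv => (mem_supp.mp hv rfl).elim

theorem facePrime_subset_facePrime_iff : facePrime F ⊆ facePrime G ↔ G ⊆ F := by
  classical
  refine ⟨fun h v hvG => by_contra fun hvF => ?_, fun hGF x hx f hf hfG => hx f hf (hfG.trans hGF)⟩
  have hv : ((Pi.single v 1 : V → ℕ) : WithTop (V → ℕ)) ∈ facePrime F := by
    simpa [supp_single v one_ne_zero] using hvF
  exact coe_mem_facePrime_iff.mp (h hv) (by simpa [supp_single v one_ne_zero] using hvG)

theorem coe_eq_sum_nsmul_single [DecidableEq V] (f : V → ℕ) :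
    (f : WithTop (V → ℕ)) = ∑ v, f v • ((Pi.single v 1 : V → ℕ) : WithTop (V → ℕ)) := by
  simp_rw [← WithTop.coe_nsmul, ← Pi.single_smul', smul_eq_mul, mul_one, ← WithTop.coe_sum,
    Finset.univ_sum_single]

theorem exists_eq_facePrime_of_isPrime {Q : Set (WithTop (V → ℕ))}
    (hQ : (withTopBinoid (V → ℕ)).IsPrime Q) : ∃ F : Finset V, Q = facePrime F := by
  classical
  refine ⟨univ.filter fun v => ((Pi.single v 1 : V → ℕ) : WithTop (V → ℕ)) ∉ Q, ?_⟩
  have hadd (a b : WithTop (V → ℕ)) : a + b ∈ Q ↔ a ∈ Q ∨ b ∈ Q := hQ.add_mem_iff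
  ext x
  induction x using WithTop.recTopCoe with
  | top =>
    obtain ⟨⟨a, ha⟩, hideal⟩ := hQ.1
    simpa using hideal a ha ⊤
  | coe f =>
    rw [coe_eq_sum_nsmul_single, Finset.sum_mem_iff_exists_mem hadd hQ.zero_notMem,
      ← coe_eq_sum_nsmul_single, coe_mem_facePrime_iff]
    simp [nsmul_mem_iff_of_add_mem_iff hadd hQ.zero_notMem, subset_iff]

variable {Δ : Finset (Finset V)}

/-- The Stanley–Reisner ideal `I_Δ`. -/
def srIdeal (Δ : Finset (Finset V)) : Set (WithTop (V → ℕ)) :=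
  {x | ∀ f : V → ℕ, x = ↑f → supp f ∉ Δ}

@[simp]
theorem top_mem_srIdeal : (⊤ : WithTop (V → ℕ)) ∈ srIdeal Δ :=
  fun _ h => (WithTop.top_ne_coe h).elim

@[simp]
theorem coe_mem_srIdeal_iff {f : V → ℕ} : (f : WithTop (V → ℕ)) ∈ srIdeal Δ ↔ supp f ∉ Δ :=
  ⟨fun h => h f rfl, fun h _ hf => WithTop.coe_injective hf ▸ h⟩

theorem genIdeal_srIdeal (hdown : ∀ F ∈ Δ, ∀ G, G ⊆ F → G ∈ Δ) :
    (withTopBinoid (V → ℕ)).genIdeal (srIdeal Δ) = srIdeal Δ := by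
  classical
  refine BinoidOn.genIdeal_eq_self _ fun x hx y => ?_
  induction x using WithTop.recTopCoe with
  | top => simp
  | coe f =>
    induction y using WithTop.recTopCoe with
    | top => simp
    | coe g =>
      rw [withTopBinoid_add, ← WithTop.coe_add, coe_mem_srIdeal_iff, supp_add]
      exact fun h => coe_mem_srIdeal_iff.mp hx (hdown _ h _ subset_union_left)

theorem srIdeal_subset_facePrime_iff (hdown : ∀ F ∈ Δ, ∀ G, G ⊆ F → G ∈ Δ) {F : Finset V} :
    srIdeal Δ ⊆ facePrime F ↔ F ∈ Δ := by
  refine ⟨fun h => by_contra fun hF => ?_, fun hF x hx f hf hfF => hx f hf (hdown F hF _ hfF)⟩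
  obtain ⟨f, rfl⟩ := exists_supp_eq F
  exact coe_mem_facePrime_iff.mp (h (coe_mem_srIdeal_iff.mpr hF)) subset_rfl

theorem zero_notMem_srIdeal (hne : ∅ ∈ Δ) : (0 : WithTop (V → ℕ)) ∉ srIdeal Δ := by
  have : supp (0 : V → ℕ) = ∅ := by ext; simp
  simpa [← WithTop.coe_zero, this] using hne

abbrev simplicialBinoid (Δ : Finset (Finset V)) :
    BinoidOn ((withTopBinoid (V → ℕ)).ReesQuot (srIdeal Δ)) :=
  (withTopBinoid (V → ℕ)).quotB (srIdeal Δ)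

theorem hasDim_simplicialBinoid (hne : ∅ ∈ Δ) (hdown : ∀ F ∈ Δ, ∀ G, G ⊆ F → G ∈ Δ) :
    (simplicialBinoid Δ).HasDim (Δ.sup Finset.card) := by
  have hsub {F} (hF : F ∈ Δ) : (withTopBinoid (V → ℕ)).genIdeal (srIdeal Δ) ⊆ facePrime F := by
    rw [genIdeal_srIdeal hdown]
    exact (srIdeal_subset_facePrime_iff hdown).mpr hF
  refine BinoidOn.hasDim_of_primes_eq_faces ⟨∅, hne⟩ hdown
    (fun F => (withTopBinoid (V → ℕ)).reesMk (srIdeal Δ) '' facePrime F)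
    (fun F hF => (isPrime_facePrime F).image_reesMk (hsub hF)) (fun P hP => ?_)
    (fun F _ G hG => (BinoidOn.image_reesMk_subset_image_reesMk_iff (hsub hG)).trans
      facePrime_subset_facePrime_iff)
  obtain ⟨F, hF⟩ := exists_eq_facePrime_of_isPrime hP.preimage_reesMk
  have hFΔ : F ∈ Δ := (srIdeal_subset_facePrime_iff hdown).mp <| hF ▸
    ((withTopBinoid (V → ℕ)).subset_genIdeal _).trans hP.genIdeal_subset_preimage_reesMk
  exact ⟨F, hFΔ, by rw [← hF, Set.image_preimage_eq P BinoidOn.reesMk_surjective]⟩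

theorem card_filter_supp_eq [DecidableEq V] {q : ℕ} (hq : q ≠ 0) (F : Finset V) :
    #{f ∈ Fintype.piFinset fun _ : V => range q | supp f = F} = (q - 1) ^ #F := by
  have : {f ∈ Fintype.piFinset fun _ : V => range q | supp f = F} =
      Fintype.piFinset fun v => if v ∈ F then Ico 1 q else {0} := by
    ext f
    simp only [mem_filter, Fintype.mem_piFinset, mem_range, Finset.ext_iff, mem_supp,
      ← forall_and]
    refine forall_congr' fun v => ?_
    by_cases hv : v ∈ F <;> simp [hv] <;> omega
  simp [this, Fintype.card_piFinset, apply_ite card, prod_ite_mem]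

theorem card_filter_supp_mem [DecidableEq V] {q : ℕ} (hq : q ≠ 0) :
    #{f ∈ Fintype.piFinset fun _ : V => range q | supp f ∈ Δ} = ∑ F ∈ Δ, (q - 1) ^ #F := by
  rw [card_eq_sum_card_fiberwise (t := Δ) (f := supp)
    (s := {f ∈ Fintype.piFinset fun _ : V => range q | supp f ∈ Δ})
    fun f hf => (mem_filter.mp hf).2]
  refine sum_congr rfl fun F hF => ?_
  rw [filter_filter, ← card_filter_supp_eq hq F]
  congr 1
  exact filter_congr fun f _ => and_iff_right_of_imp fun h => h ▸ hF

theorem reesMk_mem_frob_nplus_iff (hne : ∅ ∈ Δ) (hdown : ∀ F ∈ Δ, ∀ G, G ⊆ F → G ∈ Δ)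
    {q : ℕ} (hq : q ≠ 0) {x : WithTop (V → ℕ)} :
    (withTopBinoid (V → ℕ)).reesMk (srIdeal Δ) x ∈
        (simplicialBinoid Δ).frob q (simplicialBinoid Δ).nplus ↔
      ∀ f : V → ℕ, x = ↑f → supp f ∈ Δ → ∃ v, q ≤ f v := by
  rw [BinoidOn.reesMk_mem_frob_nplus_iff ⟨⊤, top_mem_srIdeal⟩
    (by rw [genIdeal_srIdeal hdown]; exact zero_notMem_srIdeal hne), genIdeal_srIdeal hdown,
    mem_frob_nplus_iff hq]
  induction x using WithTop.recTopCoe with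
  | top => simp
  | coe f =>
    simp only [coe_mem_srIdeal_iff, WithTop.coe_inj, forall_eq']
    tauto

theorem hkf_simplicialBinoid (hne : ∅ ∈ Δ) (hdown : ∀ F ∈ Δ, ∀ G, G ⊆ F → G ∈ Δ) {q : ℕ}
    (hq : q ≠ 0) : (simplicialBinoid Δ).hkf q = ∑ F ∈ Δ, (q - 1) ^ #F := by
  classical
  have htop : (withTopBinoid (V → ℕ)).reesMk (srIdeal Δ) ⊤ ∈
      (simplicialBinoid Δ).frob q (simplicialBinoid Δ).nplus :=
    (reesMk_mem_frob_nplus_iff hne hdown hq).mpr fun f hf => (WithTop.top_ne_coe hf).elim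
  have hcompl : ((withTopBinoid (V → ℕ)).reesMk (srIdeal Δ) ⁻¹'
      (simplicialBinoid Δ).frob q (simplicialBinoid Δ).nplus)ᶜ =
      (fun f : V → ℕ => (f : WithTop (V → ℕ))) ''
        ↑({f ∈ Fintype.piFinset fun _ : V => range q | supp f ∈ Δ} : Finset (V → ℕ)) := by
    ext x
    induction x using WithTop.recTopCoe with
    | top => simpa using htop
    | coe f =>
      simp [reesMk_mem_frob_nplus_iff hne hdown hq, WithTop.coe_inj, and_comm]
  rw [BinoidOn.hkf, Nat.card_quotient_collapseSetoid_sub_one ⟨_, htop⟩,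
    ← ncard_compl_preimage_collapseSetoid_mk fun a ha => ?_]
  · rw [hcompl, Set.ncard_image_of_injective _ WithTop.coe_injective, Set.ncard_coe_finset,
      card_filter_supp_mem hq]
  · have : (withTopBinoid (V → ℕ)).reesMk (srIdeal Δ) a =
        (withTopBinoid (V → ℕ)).reesMk (srIdeal Δ) ⊤ := BinoidOn.reesMk_eq_reesMk_iff.mpr
      (Or.inr ⟨ha, by rw [genIdeal_srIdeal hdown]; exact top_mem_srIdeal⟩)
    change (withTopBinoid (V → ℕ)).reesMk (srIdeal Δ) a ∈ _
    rwa [this]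

theorem tendsto_hkf_simplicialBinoid (hne : ∅ ∈ Δ) (hdown : ∀ F ∈ Δ, ∀ G, G ⊆ F → G ∈ Δ) :
    Tendsto (fun q : ℕ => ((simplicialBinoid Δ).hkf q : ℝ) / (q : ℝ) ^ Δ.sup Finset.card) atTop
      (𝓝 #{F ∈ Δ | #F = Δ.sup Finset.card}) := by
  refine (tendsto_sum_sub_one_pow_div_pow_sup Δ Finset.card).congr'
    ((eventually_ne_atTop 0).mono fun q hq => ?_)
  dsimp only
  rw [hkf_simplicialBinoid hne hdown hq, Nat.cast_sum]
  push_cast [Nat.cast_sub (Nat.one_le_iff_ne_zero.mpr hq)]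
  rfl

end SimplicialBinoid

theorem stmt19_general {V : Type} [Fintype V]
    (Delta : Finset (Finset V)) (hne : ∅ ∈ Delta)
    (hdown : ∀ F ∈ Delta, ∀ G, G ⊆ F → G ∈ Delta) :
    ∃ d : ℕ,
      ((withTopBinoid (V → ℕ)).quotB
          {x : WithTop (V → ℕ) | ∀ f : V → ℕ, x = ↑f →
            (Finset.univ.filter fun v => f v ≠ 0) ∉ Delta}).HasDim d ∧
      Filter.Tendsto
        (fun q : ℕ =>
          (((withTopBinoid (V → ℕ)).quotB
              {x : WithTop (V → ℕ) | ∀ f : V → ℕ, x = ↑f →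
                (Finset.univ.filter fun v => f v ≠ 0) ∉ Delta}).hkf q : ℝ)
            / (q : ℝ) ^ d)
        Filter.atTop
        (nhds ((Delta.filter fun F => F.card = Delta.sup Finset.card).card : ℝ)) :=
  ⟨_, SimplicialBinoid.hasDim_simplicialBinoid hne hdown,
    SimplicialBinoid.tendsto_hkf_simplicialBinoid hne hdown⟩

/-- Let `Δ` be a simplicial complex on a finite vertex set `V`,
and `M_Δ = F(V)/I_Δ` the associated simplicial binoid.  Then the Hilbert–Kunz
multiplicity of `M_Δ` exists and equals the number of facets of maximal
dimension. -/
theorem stmt19 {V : Type} [Fintype V] [DecidableEq V]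
    (Delta : Finset (Finset V)) (hne : ∅ ∈ Delta)
    (hdown : ∀ F ∈ Delta, ∀ G, G ⊆ F → G ∈ Delta) :
    ∃ d : ℕ,
      ((withTopBinoid (V → ℕ)).quotB
          {x : WithTop (V → ℕ) | ∀ f : V → ℕ, x = ↑f →
            (Finset.univ.filter fun v => f v ≠ 0) ∉ Delta}).HasDim d ∧
      Filter.Tendsto
        (fun q : ℕ =>
          (((withTopBinoid (V → ℕ)).quotB
              {x : WithTop (V → ℕ) | ∀ f : V → ℕ, x = ↑f →
                (Finset.univ.filter fun v => f v ≠ 0) ∉ Delta}).hkf q : ℝ)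
            / (q : ℝ) ^ d)
        Filter.atTop
        (nhds ((Delta.filter fun F => F.card = Delta.sup Finset.card).card : ℝ)) :=
  stmt19_general Delta hne hdown
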